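/- arXiv:2507.08388 — 6 statements merged into one kernel-verified Lean document; each statement's English description precedes it below -/
import Mathlib

section
/- Let G be a group with the property K̄. Then for every subgroup H of G there exists a finitely generated subgroup N of H such that the commutator subgroup of N equals the commutator subgroup of H, i.e., ⁅N,N⁆ = ⁅H,H⁆. In particular, the commutator subgroup of G is contained in a finitely generated subgroup of G. -/
/-!
Among the finitely generated subgroups `E` with `X₀ ≤ E ≤ H`, property K̄ leaves only finitely
many values of `⁅X, E⁆`; a maximal one cannot grow by adjoining any `y ∈ H`, so it is already
`⁅X, H⁆`. Applying this first with `X = H` gives a finitely generated `F ≤ H` with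
`⁅H, F⁆ = ⁅H, H⁆`, and then with `X = F`, `X₀ = F` a finitely generated `N` with `F ≤ N ≤ H` and
`⁅F, N⁆ = ⁅F, H⁆ = ⁅H, H⁆`, whence `⁅N, N⁆ = ⁅H, H⁆`.
-/

/-- A group `G` has property K̄ if for every subgroup `X` of `G` the set of
subgroups of the form `⁅X, H⁆`, with `H` ranging over subgroups of `G`, is finite. -/
def PropK (G : Type*) [Group G] : Prop :=
  ∀ X : Subgroup G, {S : Subgroup G | ∃ H : Subgroup G, S = ⁅X, H⁆}.Finite

namespace Subgroup

variable {G : Type*} [Group G]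

theorem exists_fg_between_commutator_eq {X : Subgroup G}
    (hX : {S : Subgroup G | ∃ K : Subgroup G, S = ⁅X, K⁆}.Finite)
    {X₀ H : Subgroup G} (hX₀ : X₀.FG) (hX₀H : X₀ ≤ H) :
    ∃ E : Subgroup G, E.FG ∧ X₀ ≤ E ∧ E ≤ H ∧ ⁅X, E⁆ = ⁅X, H⁆ := by
  set s : Set (Subgroup G) := {S | ∃ E : Subgroup G, E.FG ∧ X₀ ≤ E ∧ E ≤ H ∧ S = ⁅X, E⁆}
  have hs : s.Finite := hX.subset fun _ ⟨E, _, _, _, hS⟩ ↦ ⟨E, hS⟩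
  obtain ⟨_, ⟨E, hE, hX₀E, hEH, rfl⟩, hmax⟩ :=
    hs.exists_maximalFor id s ⟨_, X₀, hX₀, le_rfl, hX₀H, rfl⟩
  refine ⟨E, hE, hX₀E, hEH, le_antisymm (commutator_mono le_rfl hEH) ?_⟩
  rw [commutator_le]
  intro x hx y hy
  have hEy : E ⊔ zpowers y ≤ H := sup_le hEH (zpowers_le.mpr hy)
  have hstable : ⁅X, E ⊔ zpowers y⁆ ≤ ⁅X, E⁆ :=
    hmax ⟨_, hE.sup ⟨{y}, by simp [zpowers_eq_closure]⟩, hX₀E.trans le_sup_left, hEy, rfl⟩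
      (commutator_mono le_rfl le_sup_left)
  exact hstable (commutator_mem_commutator hx (mem_sup_right (mem_zpowers y)))

end Subgroup

open Subgroup

theorem PropK.exists_fg_le_commutator_eq {G : Type*} [Group G] (hG : PropK G)
    (H : Subgroup G) : ∃ N : Subgroup G, N ≤ H ∧ N.FG ∧ ⁅N, N⁆ = ⁅H, H⁆ := by
  obtain ⟨F, hF, -, hFH, hHF⟩ := exists_fg_between_commutator_eq (hG H) FG.bot bot_le
  obtain ⟨N, hN, hFN, hNH, hFN'⟩ := exists_fg_between_commutator_eq (hG F) hF hFH
  refine ⟨N, hNH, hN, le_antisymm (commutator_mono hNH hNH) ?_⟩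
  calc ⁅H, H⁆ = ⁅F, H⁆ := hHF.symm.trans (commutator_comm H F)
    _ = ⁅F, N⁆ := hFN'.symm
    _ ≤ ⁅N, N⁆ := commutator_mono hFN le_rfl

theorem stmt_3 (G : Type*) [Group G] (hG : PropK G) :
    (∀ H : Subgroup G, ∃ N : Subgroup G, N ≤ H ∧ N.FG ∧ ⁅N, N⁆ = ⁅H, H⁆) ∧
      ∃ F : Subgroup G, F.FG ∧ commutator G ≤ F := by
  refine ⟨hG.exists_fg_le_commutator_eq, ?_⟩
  obtain ⟨N, -, hN, hNN⟩ := hG.exists_fg_le_commutator_eq ⊤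
  exact ⟨N, hN, commutator_def G ▸ hNN ▸ N.commutator_le_self⟩
end

section
/- Let G be a torsion-free group with the property K̄∞. Then for every subgroup H of G there exists a finitely generated subgroup N of H such that the commutator subgroup of N equals the commutator subgroup of H, i.e., ⁅N,N⁆ = ⁅H,H⁆. -/
/-- A group `G` has property K̄∞ if for every subgroup `X` of `G` the set of
subgroups of the form `⁅X, H⁆`, with `H` ranging over infinite subgroups of `G`,
is finite. -/
def PropKInf (G : Type*) [Group G] : Prop :=
  ∀ X : Subgroup G, {S : Subgroup G | ∃ H : Subgroup G, Infinite H ∧ S = ⁅X, H⁆}.Finite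

/-- The old Mathlib definition: a monoid is torsion-free if no non-identity element
has finite order. -/
def Monoid.IsTorsionFree (G : Type*) [Monoid G] : Prop :=
  ∀ g : G, g ≠ 1 → ¬IsOfFinOrder g

/-! Under K̄∞, for fixed `X` the subgroups `⁅X, F⁆`, with `F` finitely generated between an
infinite finitely generated `K` and `H`, take only finitely many values; a maximal one must equal
`⁅X, H⁆`, since otherwise adjoining one more element of `H` to `F` would enlarge it. In a
torsion-free group any `H ≠ ⊥` contains an infinite cyclic `K`. Applying this first with
`X = H` gives a finitely generated `E ≤ H` with `⁅H, E⁆ = ⁅H, H⁆`, and then with `X = E`, `K = E`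
a finitely generated `N` with `E ≤ N ≤ H` and `⁅E, N⁆ = ⁅E, H⁆ = ⁅H, H⁆ ≤ ⁅N, N⁆`. -/

open Subgroup

lemma Subgroup.infinite_of_le {G : Type*} [Group G] {K L : Subgroup G} (hKL : K ≤ L)
    [Infinite K] : Infinite L :=
  Infinite.of_injective _ (inclusion_injective hKL)

lemma Subgroup.fg_zpowers {G : Type*} [Group G] (g : G) : (zpowers g).FG :=
  ⟨{g}, by simp [zpowers_eq_closure]⟩

lemma PropKInf.exists_fg_commutator_eq {G : Type*} [Group G] (hG : PropKInf G)
    (X : Subgroup G) {K H : Subgroup G} (hKH : K ≤ H) (hKfg : K.FG) [Infinite K] :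
    ∃ F : Subgroup G, K ≤ F ∧ F ≤ H ∧ F.FG ∧ ⁅X, F⁆ = ⁅X, H⁆ := by
  set S : Set (Subgroup G) := {F | K ≤ F ∧ F ≤ H ∧ F.FG}
  have hfin : ((fun F ↦ ⁅X, F⁆) '' S).Finite := (hG X).subset <| by
    rintro _ ⟨F, ⟨hKF, -, -⟩, rfl⟩
    exact ⟨F, infinite_of_le hKF, rfl⟩
  obtain ⟨F, ⟨hKF, hFH, hFfg⟩, hmax⟩ :=
    Set.Finite.exists_maximalFor' _ S hfin ⟨K, le_rfl, hKH, hKfg⟩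
  refine ⟨F, hKF, hFH, hFfg, (commutator_mono le_rfl hFH).antisymm ?_⟩
  rw [commutator_le]
  intro x hx h hh
  have hFh : F ⊔ zpowers h ∈ S :=
    ⟨hKF.trans le_sup_left, sup_le hFH (zpowers_le.mpr hh), hFfg.sup (fg_zpowers h)⟩
  exact hmax hFh (commutator_mono le_rfl le_sup_left)
    (commutator_mem_commutator hx (mem_sup_right (mem_zpowers h)))

theorem stmt_4 (G : Type*) [Group G] (htf : Monoid.IsTorsionFree G)
    (hG : PropKInf G) (H : Subgroup G) :
    ∃ N : Subgroup G, N ≤ H ∧ N.FG ∧ ⁅N, N⁆ = ⁅H, H⁆ := by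
  obtain hbot | ⟨g, hgH, hg⟩ := H.bot_or_exists_ne_one
  · exact ⟨⊥, bot_le, .bot, by rw [hbot]⟩
  have : Infinite (zpowers g) := (infinite_zpowers.mpr (htf g hg)).to_subtype
  obtain ⟨E, hgE, hEH, hEfg, hHE⟩ :=
    hG.exists_fg_commutator_eq H (zpowers_le.mpr hgH) (fg_zpowers g)
  have : Infinite E := infinite_of_le hgE
  obtain ⟨N, hEN, hNH, hNfg, hEN'⟩ := hG.exists_fg_commutator_eq E hEH hEfg
  refine ⟨N, hNH, hNfg, (commutator_mono hNH hNH).antisymm ?_⟩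
  calc ⁅H, H⁆ = ⁅E, H⁆ := by rw [← hHE, commutator_comm]
    _ = ⁅E, N⁆ := hEN'.symm
    _ ≤ ⁅N, N⁆ := commutator_mono hEN le_rfl
end

section
/- Let G be a periodic group with the property K̄. Then the commutator subgroup ⁅G,G⁆ of G is finitely generated. -/
/-!
By property K̄ the subgroups `⁅X, ⟨g⟩⁆`, `g ∈ G`, take only finitely many values, so
`⁅X, G⁆ = ⨆ g, ⁅X, ⟨g⟩⁆` is a finite join. In a periodic group every `⟨g⟩` is finite, and the
commutator of two finite subgroups is generated by finitely many commutators. Applying this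
first to `X = ⟨g⟩` shows that each `⁅⟨g⟩, G⁆` is finitely generated, and then to `X = G`
that `⁅G, G⁆ = ⨆ g, ⁅⟨g⟩, G⁆` is a finite join of finitely generated subgroups.
-/

namespace Subgroup

open scoped commutatorElement

variable {G : Type*} [Group G]

theorem FG.iSup_of_finite_range {ι : Sort*} {f : ι → Subgroup G} (hf : (Set.range f).Finite)
    (hfg : ∀ i, (f i).FG) : (⨆ i, f i).FG := by
  have h := FG.biSup hf id (by rintro _ ⟨i, rfl⟩; exact hfg i)
  rwa [iSup_range] at h

theorem commutator_fg_of_finite (H K : Subgroup G) [Finite H] [Finite K] :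
    (⁅H, K⁆ : Subgroup G).FG :=
  (fg_iff _).2 ⟨Set.image2 (⁅·, ·⁆) (H : Set G) K, (commutator_def H K).symm,
    (Set.toFinite _).image2 _ (Set.toFinite _)⟩

theorem commutator_top_right_eq_iSup_zpowers (H : Subgroup G) :
    ⁅H, ⊤⁆ = ⨆ g : G, ⁅H, zpowers g⁆ := by
  refine le_antisymm ?_ (iSup_le fun g => commutator_mono le_rfl le_top)
  rw [commutator_le]
  intro h hh g _
  exact le_iSup (fun g => ⁅H, zpowers g⁆) g (commutator_mem_commutator hh (mem_zpowers g))

end Subgroup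

open Subgroup

theorem PropK.commutator_top_right_fg {G : Type*} [Group G] (hG : PropK G) {X : Subgroup G}
    (hX : ∀ g : G, (⁅X, zpowers g⁆ : Subgroup G).FG) : (⁅X, ⊤⁆ : Subgroup G).FG := by
  rw [commutator_top_right_eq_iSup_zpowers]
  exact .iSup_of_finite_range ((hG X).subset (Set.range_subset_iff.2 fun g => ⟨_, rfl⟩)) hX

theorem stmt_6 (G : Type*) [Group G] (hper : Monoid.IsTorsion G)
    (hG : PropK G) : (commutator G).FG := by
  have hcyclic (g : G) : Finite (zpowers g) := finite_zpowers.2 (hper g)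
  have hconj (g : G) : (⁅zpowers g, ⊤⁆ : Subgroup G).FG :=
    hG.commutator_top_right_fg fun h => commutator_fg_of_finite _ _
  rw [commutator_def]
  exact hG.commutator_top_right_fg fun g => commutator_comm (zpowers g) ⊤ ▸ hconj g
end

section
/- Let G be a residually finite group with the property K̄∞. Then the commutator subgroup ⁅G,G⁆ of G is finite. -/
/-!
For infinite `G` (the finite case being trivial) every subgroup of finite index is infinite, so by K̄∞ the subgroups
`⁅G, N⁆`, `N` normal of finite index, form a finite family. Pick `N₁` with `⁅G, N₁⁆` minimal;
as `⁅G, N ⊓ N₁⁆ ≤ ⁅G, N₁⁆`, minimality gives `⁅G, N₁⁆ ≤ N ⊓ N₁ ≤ N` for every such `N`.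
Residual finiteness then forces `⁅G, N₁⁆ = 1`, i.e. `N₁` is central, so the centre has finite
index and Schur's theorem makes `⁅G, G⁆` finite.
-/

section

open Subgroup
open scoped commutatorElement

variable {G : Type*} [Group G]

theorem commutatorElement_mul_mem_center {g h z w : G} (hz : z ∈ center G) (hw : w ∈ center G) :
    ⁅g * z, h * w⁆ = ⁅g, h⁆ := by
  rw [mem_center_iff] at hz hw
  simp only [commutatorElement_def, mul_inv_rev]
  calc g * z * (h * w) * (z⁻¹ * g⁻¹) * (w⁻¹ * h⁻¹)
      = g * (z * (h * w) * z⁻¹) * g⁻¹ * (w⁻¹ * h⁻¹) := by group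
    _ = g * h * (w * g⁻¹ * w⁻¹) * h⁻¹ := by rw [← hz (h * w)]; group
    _ = g * h * g⁻¹ * h⁻¹ := by rw [← hw g⁻¹]; group

instance finite_commutatorSet_of_finiteIndex_center [(center G).FiniteIndex] :
    Finite (commutatorSet G) := by
  refine Set.Finite.to_subtype ((Set.finite_range
    fun p : (G ⧸ center G) × (G ⧸ center G) => ⁅p.1.out, p.2.out⁆).subset ?_)
  rintro _ ⟨g, h, rfl⟩
  obtain ⟨z, hz⟩ := QuotientGroup.mk_out_eq_mul (center G) g
  obtain ⟨w, hw⟩ := QuotientGroup.mk_out_eq_mul (center G) h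
  exact ⟨(g, h), by simp only [hz, hw, commutatorElement_mul_mem_center z.2 w.2]⟩

theorem Subgroup.infinite_of_finiteIndex [Infinite G] (H : Subgroup G) [H.FiniteIndex] :
    Infinite H :=
  not_finite_iff_infinite.mp fun hH =>
    not_finite_iff_infinite.mpr ‹_› ((finite_iff_finite_and_finiteIndex H).mpr ⟨hH, inferInstance⟩)

theorem PropKInf.exists_commutator_top_le_of_finiteIndex [Infinite G] (hG : PropKInf G) :
    ∃ N₁ : Subgroup G, N₁.Normal ∧ N₁.FiniteIndex ∧
      ∀ N : Subgroup G, N.Normal → N.FiniteIndex → ⁅(⊤ : Subgroup G), N₁⁆ ≤ N := by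
  set V : Set (Subgroup G) :=
    {S | ∃ N : Subgroup G, N.Normal ∧ N.FiniteIndex ∧ S = ⁅(⊤ : Subgroup G), N⁆}
  have hV : V.Finite := (hG ⊤).subset fun _ ⟨N, _, _, hS⟩ => ⟨N, N.infinite_of_finiteIndex, hS⟩
  obtain ⟨_, ⟨N₁, hN₁, hN₁fi, rfl⟩, hmin⟩ :=
    hV.exists_minimal ⟨_, ⊤, inferInstance, inferInstance, rfl⟩
  refine ⟨N₁, hN₁, hN₁fi, fun N hN hNfi => ?_⟩
  have hle : ⁅(⊤ : Subgroup G), N ⊓ N₁⁆ ≤ ⁅(⊤ : Subgroup G), N₁⁆ :=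
    commutator_mono le_rfl inf_le_right
  calc ⁅(⊤ : Subgroup G), N₁⁆ ≤ ⁅(⊤ : Subgroup G), N ⊓ N₁⁆ :=
        hmin ⟨N ⊓ N₁, inferInstance, inferInstance, rfl⟩ hle
    _ ≤ N ⊓ N₁ := commutator_le_right _ _
    _ ≤ N := inf_le_left

end

theorem stmt_8 (G : Type*) [Group G]
    (hrf : ∀ g : G, (∀ N : Subgroup G, N.Normal → N.FiniteIndex → g ∈ N) → g = 1)
    (hG : PropKInf G) : Finite (commutator G) := by
  cases finite_or_infinite G
  · infer_instance
  obtain ⟨N₁, -, hN₁fi, hN₁⟩ := hG.exists_commutator_top_le_of_finiteIndex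
  have hbot : ⁅(⊤ : Subgroup G), N₁⁆ = ⊥ :=
    (Subgroup.eq_bot_iff_forall _).mpr fun g hg => hrf g fun N hN hNfi => hN₁ N hN hNfi hg
  have : (Subgroup.center G).FiniteIndex :=
    Subgroup.finiteIndex_of_le (Subgroup.commutator_top_left_eq_bot_iff_le_center.mp hbot)
  -- Schur: `finite_commutatorSet_of_finiteIndex_center`, then Mathlib's `Finite (commutator G)`
  infer_instance
end

section
/- Let G be a perfect group with the property K̄. Then G is finitely generated. -/
namespace Subgroup

theorem exists_finite_commutator_closure_eq_commutator_top {G : Type*} [Group G]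
    {X : Subgroup G} (hX : {S : Subgroup G | ∃ H : Subgroup G, S = ⁅X, H⁆}.Finite) :
    ∃ s : Set G, s.Finite ∧ ⁅X, closure s⁆ = ⁅X, ⊤⁆ := by
  set T := {S : Subgroup G | ∃ s : Set G, s.Finite ∧ S = ⁅X, closure s⁆}
  have hT : T.Finite := hX.subset fun S ⟨s, _, hS⟩ ↦ ⟨closure s, hS⟩
  obtain ⟨_, ⟨s, hs, rfl⟩, hmax⟩ :=
    hT.exists_maximal ⟨⁅X, closure ∅⁆, ∅, Set.finite_empty, rfl⟩
  refine ⟨s, hs, le_antisymm (commutator_mono le_rfl le_top) ?_⟩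
  rw [commutator_le]
  intro x hx g _
  have hg : ⁅X, closure (insert g s)⁆ ≤ ⁅X, closure s⁆ :=
    hmax ⟨insert g s, hs.insert g, rfl⟩
      (commutator_mono le_rfl (closure_mono (Set.subset_insert g s)))
  exact hg (commutator_mem_commutator hx (subset_closure (Set.mem_insert g s)))

end Subgroup

theorem stmt_9 (G : Type*) [Group G] (hperf : commutator G = ⊤)
    (hG : PropK G) : Group.FG G := by
  obtain ⟨s, hs, hs_eq⟩ := Subgroup.exists_finite_commutator_closure_eq_commutator_top (hG ⊤)
  have hs_top : ⁅⊤, Subgroup.closure s⁆ = (⊤ : Subgroup G) := hs_eq.trans hperf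
  obtain ⟨t, ht, ht_eq⟩ :=
    Subgroup.exists_finite_commutator_closure_eq_commutator_top (hG (Subgroup.closure s))
  have hst_top : ⁅Subgroup.closure s, Subgroup.closure t⁆ = ⊤ := by
    rw [ht_eq, Subgroup.commutator_comm, hs_top]
  refine Group.fg_iff.2 ⟨s ∪ t, eq_top_iff.2 ?_, hs.union ht⟩
  rw [Subgroup.closure_union, ← hst_top]
  exact Subgroup.commutator_le_sup _ _
end

section
/- Let G be a group with the property K̄∞. If the center Z(G) of G is infinite, then G has the property K̄. -/
namespace Subgroup

variable {G : Type*} [Group G]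

open scoped commutatorElement

theorem commutatorElement_mul_right_of_mem_center {z : G} (hz : z ∈ center G) (a b : G) :
    ⁅a, b * z⁆ = ⁅a, b⁆ := by
  have hcomm : ⁅a, z⁆ = 1 := commutatorElement_eq_one_iff_mul_comm.mpr (mem_center_iff.mp hz a)
  rw [commutatorElement_mul_right_eq_mul_conj, hcomm, mul_one, mul_inv_cancel_right]

theorem commutator_sup_center_right (X H : Subgroup G) : ⁅X, H ⊔ center G⁆ = ⁅X, H⁆ := by
  refine le_antisymm ?_ (commutator_mono le_rfl le_sup_left)
  rw [commutator_le]
  intro x hx g hg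
  rw [← SetLike.mem_coe, mul_normal] at hg
  obtain ⟨h, hh, z, hz, rfl⟩ := Set.mem_mul.mp hg
  rw [commutatorElement_mul_right_of_mem_center hz]
  exact commutator_mem_commutator hx hh

end Subgroup

theorem stmt_10 (G : Type*) [Group G] (hG : PropKInf G)
    (hcen : Infinite (Subgroup.center G)) : PropK G := by
  intro X
  refine (hG X).subset ?_
  rintro _ ⟨H, rfl⟩
  have hle : Subgroup.center G ≤ H ⊔ Subgroup.center G := le_sup_right
  exact ⟨H ⊔ Subgroup.center G,
    Infinite.of_injective _ (Subgroup.inclusion_injective hle),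
    (Subgroup.commutator_sup_center_right X H).symm⟩
end
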